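/- Let a(n) satisfy a(0)=3, a(1)=1, a(2)=5, a(n)=a(n-1)+2a(n-2)+a(n-3) for n ≥ 3 (generating function (3−2x−2x²)/(1−x−2x²−x³)). Then for every prime p, a(p) ≡ 1 (mod p). -/

import Mathlib

/-!
The sequence is `a n = tr (C ^ n)` for the companion matrix `C` of `x³ - x² - 2x - 1`, since
Cayley–Hamilton gives the recurrence for the traces of the powers of `C`. Modulo a prime `p`,
the trace of a `p`-th power of a matrix is the `p`-th power of its trace, so
`a p ≡ (tr C) ^ p = 1`.
-/

open Matrix

theorem Matrix.trace_pow_prime_modEq {n : Type*} [Fintype n] [DecidableEq n]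
    (M : Matrix n n ℤ) {p : ℕ} (hp : p.Prime) :
    trace (M ^ p) ≡ trace M ^ p [ZMOD p] := by
  have := Fact.mk hp
  have trace_cast (A : Matrix n n ℤ) :
      ((trace A : ℤ) : ZMod p) = trace (A.map (Int.castRingHom (ZMod p))) :=
    AddMonoidHom.map_trace (Int.castRingHom (ZMod p)) A
  rw [← ZMod.intCast_eq_intCast_iff, Int.cast_pow, trace_cast, trace_cast, Matrix.map_pow,
    ZMod.trace_pow_card]

/-- The companion matrix of `x³ - x² - 2x - 1`. -/
def companion : Matrix (Fin 3) (Fin 3) ℤ := !![0, 0, 1; 1, 0, 2; 0, 1, 1]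

lemma companion_pow_three : companion ^ 3 = companion ^ 2 + 2 • companion + 1 := by
  ext i j
  fin_cases i <;> fin_cases j <;>
    simp [companion, pow_succ, Matrix.mul_apply, Fin.sum_univ_three]

lemma trace_companion_pow_add_three (n : ℕ) :
    trace (companion ^ (n + 3)) =
      trace (companion ^ (n + 2)) + 2 * trace (companion ^ (n + 1)) + trace (companion ^ n) := by
  rw [pow_add, companion_pow_three, mul_add, mul_add, mul_one, mul_smul_comm, trace_add,
    trace_add, trace_smul, ← pow_add, ← pow_succ, nsmul_eq_mul, Nat.cast_ofNat]

theorem eq_trace_companion_pow (a : ℕ → ℤ) (h0 : a 0 = 3) (h1 : a 1 = 1) (h2 : a 2 = 5)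
    (hrec : ∀ n, a (n + 3) = a (n + 2) + 2 * a (n + 1) + a n) :
    ∀ n, a n = trace (companion ^ n)
  | 0 => by simp [h0]
  | 1 => by simp [h1, companion, trace_fin_three]
  | 2 => by simp [h2, companion, sq, trace_fin_three]
  | n + 3 => by
    rw [hrec, trace_companion_pow_add_three, eq_trace_companion_pow a h0 h1 h2 hrec n,
      eq_trace_companion_pow a h0 h1 h2 hrec (n + 1), eq_trace_companion_pow a h0 h1 h2 hrec (n + 2)]

theorem thm5_prime (a : ℕ → ℤ)
    (h0 : a 0 = 3) (h1 : a 1 = 1) (h2 : a 2 = 5)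
    (hrec : ∀ n, 3 ≤ n → a n = a (n - 1) + 2 * a (n - 2) + a (n - 3)) :
    ∀ p : ℕ, p.Prime → a p ≡ 1 [ZMOD (p : ℤ)] := by
  intro p hp
  have hrec' (n : ℕ) : a (n + 3) = a (n + 2) + 2 * a (n + 1) + a n := hrec (n + 3) (by omega)
  have trace_companion : trace companion = 1 := by simp [companion, trace_fin_three]
  rw [eq_trace_companion_pow a h0 h1 h2 hrec' p]
  simpa [trace_companion] using companion.trace_pow_prime_modEq hp
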